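/- arXiv:1911.02370 — 4 statements merged into one kernel-verified Lean document; each statement's English description precedes it below -/
import Mathlib

section
/- Let f : ℝ → ℝ≥0∞ be an even function that is antitone (decreasing) on [0, ∞) and integrable on a symmetric open interval I = (-c, c). Then for every measurable subset E ⊆ I, the integral ∫_E f dλ ≤ 2 ∫_0^{(λ E)/2} f(x) dx, where λ is Lebesgue measure. -/
open MeasureTheory Set
open scoped ENNReal

/-!
Let `r = λ(E)/2` and `B = (-r, r)`, so that `λ(B) = λ(E)` and hence `λ(E \ B) = λ(B \ E)`.
Since `f` is even and decreasing in `|x|`, it is at most `f r` on `E \ B` and at least `f r`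
on `B \ E`; so trading `E \ B` for `B \ E` can only increase the integral, which gives
`∫_E f ≤ ∫_B f = 2 ∫_0^r f`.
-/

theorem setLIntegral_le_of_measure_sdiff_eq {α : Type*} [MeasurableSpace α] {μ : Measure α}
    {f : α → ℝ≥0∞} {s t : Set α} (hs : MeasurableSet s) (ht : MeasurableSet t)
    (hμ : μ (s \ t) = μ (t \ s)) (a : ℝ≥0∞)
    (hst : ∀ x ∈ s \ t, f x ≤ a) (hts : ∀ x ∈ t \ s, a ≤ f x) :
    ∫⁻ x in s, f x ∂μ ≤ ∫⁻ x in t, f x ∂μ := by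
  have hdiff : ∫⁻ x in s \ t, f x ∂μ ≤ ∫⁻ x in t \ s, f x ∂μ :=
    calc ∫⁻ x in s \ t, f x ∂μ ≤ ∫⁻ _ in s \ t, a ∂μ := setLIntegral_mono' (hs.diff ht) hst
      _ = ∫⁻ _ in t \ s, a ∂μ := by rw [setLIntegral_const, setLIntegral_const, hμ]
      _ ≤ ∫⁻ x in t \ s, f x ∂μ := setLIntegral_mono' (ht.diff hs) hts
  rw [← lintegral_inter_add_sdiff f s ht, ← lintegral_inter_add_sdiff f t hs, inter_comm]
  gcongr

theorem setLIntegral_Ioo_neg_eq_two_mul {f : ℝ → ℝ≥0∞} (heven : ∀ x, f (-x) = f x) (r : ℝ) :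
    ∫⁻ x in Ioo (-r) r, f x = 2 * ∫⁻ x in Ioo 0 r, f x := by
  rcases le_or_gt r 0 with hr | hr
  · simp [Ioo_eq_empty_of_le hr, Ioo_eq_empty_of_le (show r ≤ -r by linarith)]
  have hneg : ∫⁻ x in Ioo (-r) 0, f x = ∫⁻ x in Ioo 0 r, f x := by
    have himage : Neg.neg '' Ioo 0 r = Ioo (-r) 0 := by simp
    rw [← himage, ← (Measure.measurePreserving_neg volume).setLIntegral_comp_emb
      (Homeomorph.neg ℝ).measurableEmbedding]
    simp only [heven]
  rw [← Ioo_union_Ico_eq_Ioo (neg_neg_of_pos hr) hr.le,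
    lintegral_union measurableSet_Ico (Ico_disjoint_Ico_same.mono_left Ioo_subset_Ico_self),
    setLIntegral_congr Ioo_ae_eq_Ico.symm, hneg, two_mul]

theorem apply_le_apply_of_abs_le {α β : Type*} [AddCommGroup α] [LinearOrder α]
    [IsOrderedAddMonoid α] [Preorder β] {f : α → β} (heven : ∀ x, f (-x) = f x)
    (hanti : AntitoneOn f (Ici 0)) {x y : α} (h : |x| ≤ |y|) : f y ≤ f x := by
  have habs : ∀ z, f |z| = f z := fun z ↦ by
    rcases abs_choice z with hz | hz <;> rw [hz]
    exact heven z
  rw [← habs x, ← habs y]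
  exact hanti (abs_nonneg x) (abs_nonneg y) h

theorem setLIntegral_le_setLIntegral_Ioo_of_even_of_antitoneOn {f : ℝ → ℝ≥0∞}
    (heven : ∀ x, f (-x) = f x) (hanti : AntitoneOn f (Ici 0)) {E : Set ℝ}
    (hE : MeasurableSet E) (hfin : volume E ≠ ∞) :
    ∫⁻ x in E, f x ≤
      ∫⁻ x in Ioo (-((volume E).toReal / 2)) ((volume E).toReal / 2), f x := by
  set r := (volume E).toReal / 2
  have hr : |r| = r := abs_of_nonneg (by positivity)
  have hvol : volume E = volume (Ioo (-r) r) := by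
    rw [Real.volume_Ioo, show r - -r = (volume E).toReal by ring, ENNReal.ofReal_toReal hfin]
  have hsdiff : volume (E \ Ioo (-r) r) = volume (Ioo (-r) r \ E) :=
    measure_sdiff_symm hE.nullMeasurableSet measurableSet_Ioo.nullMeasurableSet hvol
      (ne_top_of_le_ne_top hfin (measure_mono inter_subset_left))
  refine setLIntegral_le_of_measure_sdiff_eq hE measurableSet_Ioo hsdiff (f r) ?_ ?_
  · rintro x ⟨-, hx⟩
    refine apply_le_apply_of_abs_le heven hanti ?_
    rw [hr]
    exact not_lt.mp fun h ↦ hx (abs_lt.mp h)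
  · rintro x ⟨hx, -⟩
    refine apply_le_apply_of_abs_le heven hanti ?_
    rw [hr]
    exact (abs_lt.mpr hx).le

theorem small_arcs_rearrangement_general (f : ℝ → ℝ≥0∞) (c : ℝ)
    (heven : ∀ x : ℝ, f (-x) = f x)
    (hanti : AntitoneOn f (Set.Ici (0 : ℝ)))
    (E : Set ℝ) (hE : MeasurableSet E) (hEI : E ⊆ Set.Ioo (-c) c) :
    ∫⁻ x in E, f x ≤ 2 * ∫⁻ x in Set.Ioo (0 : ℝ) ((volume E).toReal / 2), f x := by
  have hfin : volume E ≠ ∞ :=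
    ne_top_of_le_ne_top (by simp [Real.volume_Ioo]) (measure_mono hEI)
  rw [← setLIntegral_Ioo_neg_eq_two_mul heven]
  exact setLIntegral_le_setLIntegral_Ioo_of_even_of_antitoneOn heven hanti hE hfin

/-- Goldberg–Ostrovskii rearrangement lemma: for an even function `f`
decreasing on `[0,∞)` and integrable on a symmetric open interval `(-c, c)`,
the integral over any measurable `E ⊆ (-c, c)` is at most
`2 ∫_0^{(λ E)/2} f`. -/
theorem small_arcs_rearrangement (f : ℝ → ℝ≥0∞) (c : ℝ) (hc : 0 < c)
    (heven : ∀ x : ℝ, f (-x) = f x)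
    (hanti : AntitoneOn f (Set.Ici (0 : ℝ)))
    (hint : ∫⁻ x in Set.Ioo (-c) c, f x < ⊤)
    (E : Set ℝ) (hE : MeasurableSet E) (hEI : E ⊆ Set.Ioo (-c) c) :
    ∫⁻ x in E, f x ≤ 2 * ∫⁻ x in Set.Ioo (0 : ℝ) ((volume E).toReal / 2), f x :=
  small_arcs_rearrangement_general f c heven hanti E hE hEI
end

section
/- Let b ∈ (0,1], R ≥ 1, and let E ⊆ [0, R] be measurable with m := λ(E) ∈ (0, R]. Then m + min(m, 3bR) · ln(3ebR / min(m, 3bR)) ≤ (2 + ln 3) · m · ln(eR / m). -/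
/-!
Write `μ = min(m, 3bR)`. Since `b ≤ 1`, `μ ln(3ebR/μ) ≤ μ ln(3eR/μ)`; as `x ↦ x ln(t/x)` increases
on `(0, t/e]` and `μ ≤ m ≤ R ≤ 3eR/e`, this is at most `m ln(3eR/m) = m ln 3 + m ln(eR/m)`.
Finally `ln(eR/m) ≥ 1` absorbs the remaining `m + m ln 3`.
-/

open MeasureTheory Real Set

namespace Real

theorem monotoneOn_mul_log_div (t : ℝ) :
    MonotoneOn (fun x ↦ x * log (t / x)) (Ioc 0 (t / exp 1)) := by
  rintro x ⟨hx0, -⟩ y ⟨hy0, hyt⟩ hxy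
  have ht : 0 < t := (div_pos_iff_of_pos_right (exp_pos 1)).mp (hy0.trans_le hyt)
  have hlog_ty : 1 ≤ log (t / y) := by
    rw [le_log_iff_exp_le (by positivity), le_div_iff₀ hy0, mul_comm]
    exact (le_div_iff₀ (exp_pos 1)).mp hyt
  have hlog_yx : log (y / x) ≤ y / x - 1 := log_le_sub_one_of_pos (by positivity)
  have hsplit : log (t / x) = log (t / y) + log (y / x) := by
    rw [← log_mul (by positivity) (by positivity)]
    field_simp
  calc x * log (t / x) = x * log (t / y) + x * log (y / x) := by rw [hsplit, mul_add]
    _ ≤ x * log (t / y) + x * (y / x - 1) := by gcongr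
    _ = x * log (t / y) + (y - x) * 1 := by field_simp
    _ ≤ x * log (t / y) + (y - x) * log (t / y) := by gcongr
    _ = y * log (t / y) := by ring

theorem one_le_log_exp_one_mul_div {m R : ℝ} (hm0 : 0 < m) (hmR : m ≤ R) :
    1 ≤ log (exp 1 * R / m) := by
  have hR0 : 0 < R := hm0.trans_le hmR
  rw [le_log_iff_exp_le (by positivity), le_div_iff₀ hm0]
  exact mul_le_mul_of_nonneg_left hmR (exp_pos 1).le

end Real

theorem M_compress_general_general (b R m : ℝ) (hb : b ∈ Set.Ioc (0 : ℝ) 1) (hm0 : 0 < m) (hmR : m ≤ R) :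
    m + min m (3 * b * R) * Real.log (3 * Real.exp 1 * b * R / min m (3 * b * R)) ≤
      (2 + Real.log 3) * m * Real.log (Real.exp 1 * R / m) := by
  obtain ⟨hb0, hb1⟩ := hb
  set μ := min m (3 * b * R)
  have hR0 : 0 < R := hm0.trans_le hmR
  have hμ0 : 0 < μ := lt_min hm0 (by positivity)
  have hdrop_b : μ * log (3 * exp 1 * b * R / μ) ≤ μ * log (3 * exp 1 * R / μ) := by
    have : 3 * exp 1 * b * R ≤ 3 * exp 1 * R :=
      mul_le_mul_of_nonneg_right (mul_le_of_le_one_right (by positivity) hb1) hR0.le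
    gcongr
  have hmono : μ * log (3 * exp 1 * R / μ) ≤ m * log (3 * exp 1 * R / m) :=
    monotoneOn_mul_log_div _ ⟨hμ0, by field_simp; linarith [min_le_left m (3 * b * R)]⟩
      ⟨hm0, by field_simp; linarith⟩ (min_le_left _ _)
  have hsplit : log (3 * exp 1 * R / m) = log 3 + log (exp 1 * R / m) := by
    rw [← log_mul (by norm_num) (by positivity), mul_div_assoc, mul_assoc, mul_div_assoc]
  have hL := one_le_log_exp_one_mul_div hm0 hmR
  calc m + μ * log (3 * exp 1 * b * R / μ)
      ≤ m * (1 + log 3) + m * log (exp 1 * R / m) := by rw [hsplit] at hmono; linarith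
    _ ≤ m * (1 + log 3) * log (exp 1 * R / m) + m * log (exp 1 * R / m) := by
        gcongr ?_ + _
        exact le_mul_of_one_le_right (by positivity) hL
    _ = (2 + log 3) * m * log (exp 1 * R / m) := by ring

/-- Remark 1 (inequality (1.8)): for `b ∈ (0,1]`, `R ≥ 1` and measurable
`E ⊆ [0,R]` with `m := λ(E) ∈ (0, R]`, one has
`m + min(m,3bR)·ln(3ebR/min(m,3bR)) ≤ (2 + ln 3)·m·ln(eR/m)`. -/
theorem M_compress_general (b R m : ℝ) (hb : b ∈ Set.Ioc (0 : ℝ) 1) (hR : 1 ≤ R)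
    (E : Set ℝ) (hE : MeasurableSet E) (hER : E ⊆ Set.Icc 0 R)
    (hm : (volume E).toReal = m) (hm0 : 0 < m) (hmR : m ≤ R) :
    m + min m (3 * b * R) * Real.log (3 * Real.exp 1 * b * R / min m (3 * b * R)) ≤
      (2 + Real.log 3) * m * Real.log (Real.exp 1 * R / m) :=
  M_compress_general_general b R m hb hm0 hmR
end

section
/- For any b ∈ (0, 1], any R > 0, any measurable set E ⊆ ℝ, and any t ∈ ℝ, the integral ∫_{E} max(0, ln(3bR/|s - t|)) ds ≤ min(λ(E), 6bR) · ln(6ebR / min(λ(E), 6bR)), with the convention that the right side is 0 when λ(E) = 0. -/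
open MeasureTheory Real Set
open scoped ENNReal

/-!
By the layer cake formula, `∫_E f = ∫_0^∞ λ(E ∩ {f > u}) du ≤ ∫_0^∞ min(λE, λ{f > u}) du`.
For `f = ln⁺(c/|· - t|)` the superlevel set `{f > u}` lies in the ball of radius `c e^{-u}`
about `t`, so with `m = min(λE, 2c)` the integral is at most `∫_0^∞ min(m, 2c e^{-u}) du`,
which equals `m ln(2ec/m)`: the minimum is `m` up to `u₀ = ln(2c/m)` and `2c e^{-u}` after it.
-/

theorem lintegral_restrict_le_lintegral_min_meas_lt {α : Type*} [MeasurableSpace α]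
    {μ : Measure α} {f : α → ℝ} {E : Set α} (hf_nn : 0 ≤ f)
    (hf : AEMeasurable f (μ.restrict E)) :
    ∫⁻ x in E, ENNReal.ofReal (f x) ∂μ ≤ ∫⁻ u in Ioi 0, min (μ E) (μ {x | u < f x}) := by
  rw [lintegral_eq_lintegral_meas_lt _ (Filter.Eventually.of_forall hf_nn) hf]
  gcongr with u
  exact le_min ((measure_mono (subset_univ _)).trans (Measure.restrict_apply_univ E).le)
    (Measure.restrict_apply_le E _)

theorem abs_lt_mul_exp_neg_of_lt_log_div_abs {c u x : ℝ} (hc : 0 < c) (hu : 0 ≤ u)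
    (h : u < log (c / |x|)) : |x| < c * exp (-u) := by
  have hx : 0 < |x| := abs_pos.2 fun hx => by simp [hx] at h; linarith
  have h' := (lt_log_iff_exp_lt (by positivity)).1 h
  rw [lt_div_iff₀ hx] at h'
  rw [exp_neg, ← div_eq_mul_inv, lt_div_iff₀ (exp_pos u)]
  linarith

theorem volume_setOf_lt_max_zero_log_div_abs_sub_le {c u : ℝ} (hc : 0 < c) (hu : 0 ≤ u)
    (t : ℝ) : volume {s | u < max 0 (log (c / |s - t|))} ≤ ENNReal.ofReal (2 * c * exp (-u)) := by
  rw [mul_assoc, ← Real.volume_ball]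
  exact measure_mono fun s hs =>
    abs_lt_mul_exp_neg_of_lt_log_div_abs hc hu ((lt_max_iff.1 hs).resolve_left hu.not_gt)

theorem integrableOn_min_mul_exp_neg {m L : ℝ} (hm : 0 ≤ m) (hL : 0 ≤ L) (a : ℝ) :
    IntegrableOn (fun u => min m (L * exp (-u))) (Ioi a) := by
  refine Integrable.mono' ((integrableOn_exp_neg_Ioi a).const_mul L) (by fun_prop) ?_
  filter_upwards with u
  rw [Real.norm_eq_abs, abs_of_nonneg (le_min hm (by positivity))]
  exact min_le_right _ _

theorem le_mul_exp_neg_iff_le_log_div {m L u : ℝ} (hm : 0 < m) (hL : 0 < L) :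
    m ≤ L * exp (-u) ↔ u ≤ log (L / m) := by
  rw [le_log_iff_exp_le (div_pos hL hm), exp_neg, ← div_eq_mul_inv, le_div_iff₀ (exp_pos u),
    le_div_iff₀' hm]

theorem integral_Ioi_min_mul_exp_neg {m L : ℝ} (hm : 0 < m) (hmL : m ≤ L) :
    ∫ u in Ioi 0, min m (L * exp (-u)) = m * log (exp 1 * L / m) := by
  set u₀ := log (L / m)
  have hu₀ : 0 ≤ u₀ := log_nonneg ((one_le_div hm).2 hmL)
  have hL : 0 < L := hm.trans_le hmL
  have h_head : ∫ u in Ioc 0 u₀, min m (L * exp (-u)) = m * u₀ := by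
    rw [setIntegral_congr_fun measurableSet_Ioc fun u hu =>
      min_eq_left ((le_mul_exp_neg_iff_le_log_div hm hL).2 hu.2), setIntegral_const,
      Real.volume_real_Ioc_of_le hu₀, sub_zero, smul_eq_mul, mul_comm]
  have h_tail : ∫ u in Ioi u₀, min m (L * exp (-u)) = m := by
    rw [setIntegral_congr_fun measurableSet_Ioi fun u hu => min_eq_right
      (not_le.1 (mt (le_mul_exp_neg_iff_le_log_div hm hL).1 (not_le.2 hu))).le,
      integral_const_mul, integral_exp_neg_Ioi, exp_neg, exp_log (div_pos hL hm)]
    field_simp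
  rw [← Ioc_union_Ioi_eq_Ioi hu₀, setIntegral_union (Ioc_disjoint_Ioi le_rfl) measurableSet_Ioi
    ((integrableOn_min_mul_exp_neg hm.le hL.le 0).mono_set Ioc_subset_Ioi_self)
    (integrableOn_min_mul_exp_neg hm.le hL.le u₀), h_head, h_tail, mul_div_assoc,
    log_mul (exp_ne_zero 1) (div_pos hL hm).ne', log_exp]
  ring

theorem setIntegral_max_zero_log_div_abs_sub_le {c : ℝ} (hc : 0 < c) (E : Set ℝ) (t : ℝ) :
    ∫ s in E, max 0 (log (c / |s - t|)) ≤
      (min (volume E) (ENNReal.ofReal (2 * c))).toReal *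
        log (2 * exp 1 * c / (min (volume E) (ENNReal.ofReal (2 * c))).toReal) := by
  set M := min (volume E) (ENNReal.ofReal (2 * c))
  have hM : M ≠ ∞ := ne_top_of_le_ne_top ENNReal.ofReal_ne_top (min_le_right _ _)
  rcases ENNReal.toReal_nonneg.eq_or_lt with hm0 | hm
  · have hE : volume E = 0 := by
      have := ((ENNReal.toReal_eq_zero_iff M).1 hm0.symm).resolve_right hM
      simpa [M, hc.not_ge] using this
    rw [setIntegral_measure_zero _ hE, ← hm0, zero_mul]
  have hmL : M.toReal ≤ 2 * c :=
    ENNReal.toReal_le_of_le_ofReal (by positivity) (min_le_right _ _)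
  have hf_nn : 0 ≤ fun s => max 0 (log (c / |s - t|)) := fun s => le_max_left _ _
  have hf : Measurable fun s => max 0 (log (c / |s - t|)) := by fun_prop
  have h_level (u : ℝ) (hu : u ∈ Ioi 0) :
      min (volume E) (volume {s | u < max 0 (log (c / |s - t|))}) ≤
        ENNReal.ofReal (min M.toReal (2 * c * exp (-u))) := by
    have h_vol := volume_setOf_lt_max_zero_log_div_abs_sub_le hc (le_of_lt hu) t
    have h_exp : 2 * c * exp (-u) ≤ 2 * c :=
      mul_le_of_le_one_right (by positivity) (exp_le_one_iff.2 (by simpa using hu.le))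
    rw [ENNReal.ofReal_min, ENNReal.ofReal_toReal hM]
    exact le_min (le_min (min_le_left _ _) ((min_le_right _ _).trans
      (h_vol.trans (ENNReal.ofReal_le_ofReal h_exp)))) ((min_le_right _ _).trans h_vol)
  rw [show 2 * exp 1 * c = exp 1 * (2 * c) by ring, ← integral_Ioi_min_mul_exp_neg hm hmL,
    integral_eq_lintegral_of_nonneg_ae (Filter.Eventually.of_forall hf_nn)
      hf.aestronglyMeasurable]
  have h_min_nn : ∀ u, 0 ≤ min M.toReal (2 * c * exp (-u)) := fun u =>
    le_min hm.le (by positivity)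
  refine ENNReal.toReal_le_of_le_ofReal (setIntegral_nonneg measurableSet_Ioi fun u _ =>
    h_min_nn u) ?_
  calc ∫⁻ s in E, ENNReal.ofReal (max 0 (log (c / |s - t|)))
      ≤ ∫⁻ u in Ioi 0, min (volume E) (volume {s | u < max 0 (log (c / |s - t|))}) :=
        lintegral_restrict_le_lintegral_min_meas_lt hf_nn hf.aemeasurable
    _ ≤ ∫⁻ u in Ioi 0, ENNReal.ofReal (min M.toReal (2 * c * exp (-u))) :=
        setLIntegral_mono' measurableSet_Ioi h_level
    _ = _ := (ofReal_integral_eq_lintegral_ofReal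
        (integrableOn_min_mul_exp_neg hm.le (by positivity) 0)
        (Filter.Eventually.of_forall h_min_nn)).symm

theorem logplus_integral_bound_general (b R : ℝ) (hb : b ∈ Set.Ioc (0 : ℝ) 1) (hR : 0 < R)
    (E : Set ℝ) (t : ℝ) :
    ∫ s in E, max 0 (Real.log (3 * b * R / |s - t|)) ≤
      (min (volume E) (ENNReal.ofReal (6 * b * R))).toReal *
        Real.log (6 * Real.exp 1 * b * R /
          (min (volume E) (ENNReal.ofReal (6 * b * R))).toReal) := by
  have h := setIntegral_max_zero_log_div_abs_sub_le (mul_pos (mul_pos three_pos hb.1) hR) E t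
  rwa [show 2 * (3 * b * R) = 6 * b * R by ring,
    show 2 * exp 1 * (3 * b * R) = 6 * exp 1 * b * R by ring] at h

/-- For `b ∈ (0,1]`, `R > 0`, a measurable `E ⊆ ℝ` and any `t ∈ ℝ`,
`∫_E ln⁺(3bR/|s−t|) ds ≤ min(λE, 6bR)·ln(6ebR/min(λE, 6bR))`. -/
theorem logplus_integral_bound (b R : ℝ) (hb : b ∈ Set.Ioc (0 : ℝ) 1) (hR : 0 < R)
    (E : Set ℝ) (hE : MeasurableSet E) (t : ℝ) :
    ∫ s in E, max 0 (Real.log (3 * b * R / |s - t|)) ≤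
      (min (volume E) (ENNReal.ofReal (6 * b * R))).toReal *
        Real.log (6 * Real.exp 1 * b * R /
          (min (volume E) (ENNReal.ofReal (6 * b * R))).toReal) :=
  logplus_integral_bound_general b R hb hR E t
end

section
/- Let μ be a positive measure on ℝ supported in [0, ∞) with distribution function n(t) := μ([0, t]) finite for all t, let b ∈ (0, 1/2], 0 ≤ r < R, and let E ⊆ [r, R] be measurable. Then ∫_r^R [∫_{(1−b)x}^{(1+b)x} ln(bx/|t−x|) dn(t)] 1_E(x) dx ≤ n((1+b)R) · sup_{t ∈ ℝ} ∫_ℝ 1_E(x) · max(0, ln(3bR/|x−t|)) dx. -/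
open MeasureTheory Set Real
open scoped ENNReal

/-!
Work in `ℝ≥0∞`. For `x ∈ E ⊆ [r, R]` and `t` in the inner range `[(1-b)x, (1+b)x] ⊆ T := [0, (1+b)R]`
we have `log (b x / |t - x|) ≤ log⁺ (3 b R / |x - t|)`, so the left side is at most
`∫_E ∫_T log⁺ (3 b R / |x - t|) dμ(t) dx`. By Tonelli this is `∫_T (∫_E … dx) dμ(t)`, and each inner
integral is bounded by the supremum, which is finite since `u ↦ log⁺ (a / |u|)` is integrable on `ℝ`.
(`log⁺` is Mathlib's `Real.posLog`, definitionally the `max 0 (log ·)` of the statement.)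
-/

lemma integrable_posLog_div_abs {a : ℝ} (ha : 0 ≤ a) :
    Integrable (fun u : ℝ => log⁺ (a / |u|)) := by
  have hIcc : IntegrableOn (fun u : ℝ => log⁺ (a / |u|)) (Icc (-a) a) := by
    have hmero : MeromorphicOn (fun u : ℝ => a / u) (uIcc (-a) a) :=
      fun u _ => (MeromorphicAt.const a u).div (MeromorphicAt.id u)
    rw [← intervalIntegrable_iff_integrableOn_Icc_of_le (by linarith)]
    simpa [abs_of_nonneg ha] using hmero.intervalIntegrable_posLog_norm
  refine hIcc.integrable_of_forall_notMem_eq_zero fun u hu => ?_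
  have hau : a < |u| := by
    by_contra h; exact hu (abs_le.1 (not_lt.1 h))
  rw [posLog_eq_zero_iff, abs_of_nonneg (by positivity)]
  exact div_le_one_of_le₀ hau.le (abs_nonneg u)

lemma bddAbove_range_setIntegral_posLog_div_abs_sub {a : ℝ} (ha : 0 ≤ a) (E : Set ℝ) :
    BddAbove (range fun t => ∫ x in E, log⁺ (a / |x - t|)) := by
  have hint := integrable_posLog_div_abs ha
  refine ⟨∫ u, log⁺ (a / |u|), ?_⟩
  rintro _ ⟨t, rfl⟩
  calc ∫ x in E, log⁺ (a / |x - t|)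
      ≤ ∫ x, log⁺ (a / |x - t|) :=
        setIntegral_le_integral (hint.comp_sub_right t) (.of_forall fun _ => posLog_nonneg)
    _ = ∫ u, log⁺ (a / |u|) := integral_sub_right_eq_self (fun u => log⁺ (a / |u|)) t

lemma log_div_abs_le_posLog_div_abs {c d : ℝ} (hc : 0 ≤ c) (hcd : c ≤ d) (s : ℝ) :
    log (c / |s|) ≤ log⁺ (d / |s|) :=
  (le_max_right _ _).trans <|
    posLog_le_posLog (div_nonneg hc (abs_nonneg s)) (div_le_div_of_nonneg_right hcd (abs_nonneg s))

lemma ofReal_integral_le_lintegral_ofReal {α : Type*} [MeasurableSpace α] (μ : Measure α)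
    (f : α → ℝ) : ENNReal.ofReal (∫ x, f x ∂μ) ≤ ∫⁻ x, ENNReal.ofReal (f x) ∂μ := by
  by_cases hf : Integrable f μ
  · rw [integral_eq_lintegral_pos_part_sub_lintegral_neg_part hf]
    exact ENNReal.ofReal_le_of_le_toReal (sub_le_self _ ENNReal.toReal_nonneg)
  · simp [integral_undef hf]

lemma ofReal_integral_mul_indicator_le_setLIntegral {α : Type*} [MeasurableSpace α]
    (μ : Measure α) {E : Set α} (hE : MeasurableSet E) {f : α → ℝ} {g : α → ℝ≥0∞}
    (hfg : ∀ x ∈ E, ENNReal.ofReal (f x) ≤ g x) :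
    ENNReal.ofReal (∫ x, f x * E.indicator (fun _ => (1 : ℝ)) x ∂μ) ≤ ∫⁻ x in E, g x ∂μ := by
  rw [← lintegral_indicator hE]
  refine (ofReal_integral_le_lintegral_ofReal μ _).trans (lintegral_mono fun x => ?_)
  by_cases hx : x ∈ E
  · simpa [indicator_of_mem hx] using hfg x hx
  · simp [indicator_of_notMem hx]

lemma lintegral_lintegral_le_measure_univ_mul {α β : Type*} [MeasurableSpace α]
    [MeasurableSpace β] {μ : Measure α} {ν : Measure β} [SFinite μ] [SFinite ν]
    {K : α → β → ℝ≥0∞} (hK : AEMeasurable (Function.uncurry K) (μ.prod ν)) {C : ℝ≥0∞}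
    (hC : ∀ y, ∫⁻ x, K x y ∂μ ≤ C) : ∫⁻ x, ∫⁻ y, K x y ∂ν ∂μ ≤ ν univ * C :=
  calc ∫⁻ x, ∫⁻ y, K x y ∂ν ∂μ = ∫⁻ y, ∫⁻ x, K x y ∂μ ∂ν := lintegral_lintegral_swap hK
    _ ≤ ∫⁻ _, C ∂ν := lintegral_mono hC
    _ = ν univ * C := by rw [lintegral_const, mul_comm]

lemma ofReal_setIntegral_log_le_setLIntegral_posLog (μ : Measure ℝ) {b x R : ℝ}
    (hb0 : 0 ≤ b) (hb1 : b ≤ 1) (hx : 0 ≤ x) (hxR : x ≤ R) :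
    ENNReal.ofReal (∫ t in Icc ((1 - b) * x) ((1 + b) * x), log (b * x / |t - x|) ∂μ) ≤
      ∫⁻ t in Icc 0 ((1 + b) * R), ENNReal.ofReal (log⁺ (3 * b * R / |x - t|)) ∂μ :=
  calc ENNReal.ofReal (∫ t in Icc ((1 - b) * x) ((1 + b) * x), log (b * x / |t - x|) ∂μ)
      ≤ ∫⁻ t in Icc ((1 - b) * x) ((1 + b) * x), ENNReal.ofReal (log (b * x / |t - x|)) ∂μ :=
        ofReal_integral_le_lintegral_ofReal _ _
    _ ≤ ∫⁻ t in Icc ((1 - b) * x) ((1 + b) * x), ENNReal.ofReal (log⁺ (3 * b * R / |x - t|)) ∂μ :=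
        lintegral_mono fun t => ENNReal.ofReal_le_ofReal <| by
          rw [abs_sub_comm x t]
          exact log_div_abs_le_posLog_div_abs (by positivity) (by nlinarith) _
    _ ≤ ∫⁻ t in Icc 0 ((1 + b) * R), ENNReal.ofReal (log⁺ (3 * b * R / |x - t|)) ∂μ :=
        lintegral_mono_set <| Icc_subset_Icc (by nlinarith) (by nlinarith)

lemma setLIntegral_setLIntegral_posLog_div_abs_sub_le (μ : Measure ℝ) {T : Set ℝ}
    (hT : μ T ≠ ⊤) {a : ℝ} (ha : 0 ≤ a) (E : Set ℝ) :
    ∫⁻ x in E, ∫⁻ t in T, ENNReal.ofReal (log⁺ (a / |x - t|)) ∂μ ≤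
      μ T * ENNReal.ofReal (⨆ t, ∫ x in E, log⁺ (a / |x - t|)) := by
  have : IsFiniteMeasure (μ.restrict T) := isFiniteMeasure_restrict.2 hT
  rw [← Measure.restrict_apply_univ T]
  refine lintegral_lintegral_le_measure_univ_mul ?_ fun t => ?_
  · exact ((continuous_posLog.measurable.comp (by fun_prop)).ennreal_ofReal).aemeasurable
  · rw [← ofReal_integral_eq_lintegral_ofReal
      ((integrable_posLog_div_abs ha).comp_sub_right t).restrict
      (.of_forall fun _ => posLog_nonneg)]
    exact ENNReal.ofReal_le_ofReal (le_ciSup (bddAbove_range_setIntegral_posLog_div_abs_sub ha E) t)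

theorem double_integral_estimate_general (μ : Measure ℝ)
    (hfin : ∀ t : ℝ, μ (Set.Icc 0 t) ≠ ⊤)
    (b r R : ℝ) (hb : b ∈ Set.Ioc (0 : ℝ) (1/2)) (hr : 0 ≤ r) (hrR : r < R)
    (E : Set ℝ) (hE : MeasurableSet E) (hER : E ⊆ Set.Icc r R) :
    (∫ x in Set.Icc r R,
        (∫ t in Set.Icc ((1 - b) * x) ((1 + b) * x), Real.log (b * x / |t - x|) ∂μ) *
          Set.indicator E (fun _ => (1:ℝ)) x) ≤
      (μ (Set.Icc 0 ((1 + b) * R))).toReal *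
        ⨆ t : ℝ, ∫ x in E, max 0 (Real.log (3 * b * R / |x - t|)) := by
  obtain ⟨hb0, hb2⟩ := hb
  have ha : 0 ≤ 3 * b * R := by nlinarith
  have hC0 : 0 ≤ ⨆ t : ℝ, ∫ x in E, log⁺ (3 * b * R / |x - t|) :=
    Real.iSup_nonneg fun _ => integral_nonneg fun _ => posLog_nonneg
  have hinner := ofReal_integral_mul_indicator_le_setLIntegral (volume.restrict (Icc r R)) hE
    fun x hx => ofReal_setIntegral_log_le_setLIntegral_posLog μ hb0.le (by linarith)
      (hr.trans (hER hx).1) (hER hx).2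
  rw [Measure.restrict_restrict hE, inter_eq_left.2 hER] at hinner
  have key := hinner.trans (setLIntegral_setLIntegral_posLog_div_abs_sub_le μ (hfin _) ha E)
  rw [← ENNReal.ofReal_toReal (hfin _), ← ENNReal.ofReal_mul ENNReal.toReal_nonneg] at key
  exact (ENNReal.ofReal_le_ofReal_iff (by positivity)).1 key

/-- The key double-integral estimate: for a positive measure `μ` on `ℝ`
supported in `[0,∞)` with finite counting function `n(t) = μ([0,t])`,
`b ∈ (0,1/2]`, `0 ≤ r < R` and measurable `E ⊆ [r,R]`,
`∫_r^R (∫_{(1−b)x}^{(1+b)x} ln(bx/|t−x|) dμ(t)) 1_E(x) dx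
  ≤ n((1+b)R) · sup_{t∈ℝ} ∫_E ln⁺(3bR/|x−t|) dx`. -/
theorem double_integral_estimate (μ : Measure ℝ)
    (hsupp : μ (Set.Iio (0:ℝ)) = 0) (hfin : ∀ t : ℝ, μ (Set.Icc 0 t) ≠ ⊤)
    (b r R : ℝ) (hb : b ∈ Set.Ioc (0 : ℝ) (1/2)) (hr : 0 ≤ r) (hrR : r < R)
    (E : Set ℝ) (hE : MeasurableSet E) (hER : E ⊆ Set.Icc r R) :
    (∫ x in Set.Icc r R,
        (∫ t in Set.Icc ((1 - b) * x) ((1 + b) * x), Real.log (b * x / |t - x|) ∂μ) *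
          Set.indicator E (fun _ => (1:ℝ)) x) ≤
      (μ (Set.Icc 0 ((1 + b) * R))).toReal *
        ⨆ t : ℝ, ∫ x in E, max 0 (Real.log (3 * b * R / |x - t|)) :=
  double_integral_estimate_general μ hfin b r R hb hr hrR E hE hER
end
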